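/- For α, β ∈ (0,1) and positive integers n, m, the maximum over (ℓ,k) ∈ {1,…,n}×{1,…,m} of the β-quantile F_{U_(ℓ:n,k:m)}⁻¹(β) equals β^{1/(mn)}. Consequently, there exists (ℓ,k) with F_{U_(ℓ:n,k:m)}⁻¹(β) ≥ 1−α if and only if mn ≥ log(β)/log(1−α). -/

import Mathlib

open MeasureTheory ProbabilityTheory Set

/-- The `r`-th smallest value (order statistic, 1-indexed, ties with multiplicity)
of a finite real vector. -/
noncomputable def orderStat {N : ℕ} (S : Fin N → ℝ) (r : ℕ) : ℝ :=
  ((Multiset.ofList (List.ofFn S)).sort (· ≤ ·)).getD (r - 1) 0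

/-- Product of `N` i.i.d. uniform distributions on `[0,1]`. -/
noncomputable def unifPi (N : ℕ) : Measure (Fin N → ℝ) :=
  Measure.pi fun _ => volume.restrict (Icc (0:ℝ) 1)

/-- The Beta(r, N-r+1) distribution: the law of the `r`-th order statistic of
`N` i.i.d. uniform random variables on `[0,1]`. -/
noncomputable def betaOS (N r : ℕ) : Measure ℝ :=
  Measure.map (fun u => orderStat u r) (unifPi N)

/-- The cdf of the Beta(r, N-r+1) distribution (cdf of `U_(r:N)`). -/
noncomputable def betaCDF (N r : ℕ) (t : ℝ) : ℝ := (betaOS N r (Iic t)).toReal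

/-- Generalized inverse (quantile function) of a cdf. -/
noncomputable def genInv (F : ℝ → ℝ) (p : ℝ) : ℝ := sInf {x | p ≤ F x}

/-- Quantile function of the Beta(r, N-r+1) distribution. -/
noncomputable def betaQuantile (N r : ℕ) (p : ℝ) : ℝ := genInv (betaCDF N r) p

/-- Quantile-of-quantiles: the `k`-th smallest of the `m` within-group `ℓ`-th
order statistics of an `n × m` array. -/
noncomputable def qqStat {n m : ℕ} (ℓ k : ℕ) (Z : Fin n → Fin m → ℝ) : ℝ :=
  orderStat (fun j => orderStat (fun i => Z i j) ℓ) k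

/-- Product of `n × m` i.i.d. uniform distributions on `[0,1]`. -/
noncomputable def unifPi2 (n m : ℕ) : Measure (Fin n → Fin m → ℝ) :=
  Measure.pi fun _ => Measure.pi fun _ => volume.restrict (Icc (0:ℝ) 1)

/-- The law of `U_(ℓ:n, k:m)`, the `k`-th order statistic of the `m` within-group
`ℓ`-th order statistics of an `n × m` array of i.i.d. uniform variables
(equivalently, of `m` i.i.d. Beta(ℓ, n-ℓ+1) variables). -/
noncomputable def betaBetaOS (n m ℓ k : ℕ) : Measure ℝ :=
  Measure.map (qqStat ℓ k) (unifPi2 n m)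

/-- The auxiliary function `g(t) = sup_{δ ∈ (0, min{t,1-t})} (t-δ)/√(log(1/δ))`. -/
noncomputable def gFun (t : ℝ) : ℝ :=
  sSup ((fun δ => (t - δ) / Real.sqrt (Real.log (1/δ))) '' Ioo 0 (min t (1 - t)))

/-- The cdf of the Poisson-Binomial distribution with parameter vector `u`,
evaluated at the integer `r`. -/
noncomputable def pbCDF {m : ℕ} (u : Fin m → ℝ) (r : ℕ) : ℝ :=
  ∑ A ∈ Finset.univ.powerset.filter (fun A : Finset (Fin m) => A.card ≤ r),
    (∏ j ∈ A, u j) * ∏ j ∈ Aᶜ, (1 - u j)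


/-! Since `U_(N:N)` is the maximum of `N` uniforms, `F_{U_(N:N)}(t) = t^N` and its quantile
function is `p ↦ p^{1/N}`. Every other order statistic is dominated by the maximum, so its cdf
is larger and its quantile function smaller; quantile functions are moreover monotone. Hence
`F_{U_(ℓ:n)}⁻¹ ∘ F_{U_(k:m)}⁻¹ (β) ≤ (β^{1/m})^{1/n} = β^{1/(mn)}`, with equality at
`(ℓ, k) = (n, m)`. The last claim is `1 - α ≤ β^{1/(mn)}` after taking logarithms. -/

theorem List.Pairwise.getElem_le_iff_lt_countP {α : Type*} [LinearOrder α] {L : List α}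
    (hL : L.Pairwise (· ≤ ·)) (t : α) {j : ℕ} (hj : j < L.length) :
    L[j] ≤ t ↔ j < L.countP (· ≤ t) := by
  induction L generalizing j with
  | nil => simp at hj
  | cons a L ih =>
    obtain ⟨ha, hL⟩ := List.pairwise_cons.mp hL
    by_cases hat : a ≤ t
    · cases j with
      | zero => simp [hat]
      | succ j => simp [hat, ih hL (Nat.lt_of_succ_lt_succ hj)]
    · have hgt : ∀ x ∈ a :: L, t < x := by
        intro x hx
        rcases List.mem_cons.mp hx with rfl | hx
        exacts [lt_of_not_ge hat, (lt_of_not_ge hat).trans_le (ha x hx)]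
      have hcount : (a :: L).countP (· ≤ t) = 0 :=
        List.countP_eq_zero.mpr fun x hx => by simpa using hgt x hx
      simp only [hcount, Nat.not_lt_zero, iff_false, not_le]
      exact hgt _ (List.getElem_mem hj)

section OrderStat

variable {N r : ℕ}

theorem orderStat_le_iff (u : Fin N → ℝ) (hr1 : 1 ≤ r) (hrN : r ≤ N) (t : ℝ) :
    orderStat u r ≤ t ↔ r ≤ (Finset.univ.filter fun i => u i ≤ t).card := by
  set L := (Multiset.ofList (List.ofFn u)).sort (· ≤ ·) with hL
  have hlen : L.length = N := by simp [L]
  have hperm : L.Perm (List.ofFn u) := by rw [← Multiset.coe_eq_coe, hL, Multiset.sort_eq]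
  have hcount : L.countP (· ≤ t) = (Finset.univ.filter fun i => u i ≤ t).card := by
    rw [hperm.countP_eq, List.ofFn_eq_map, List.countP_map, Finset.card, Finset.filter_val,
      ← Multiset.countP_eq_card_filter, Fin.univ_def]
    rfl
  have hj : r - 1 < L.length := by omega
  rw [orderStat, ← hL, List.getD_eq_getElem _ _ hj,
    (Multiset.pairwise_sort _ _).getElem_le_iff_lt_countP t hj, hcount]
  omega

theorem orderStat_self_le_iff (u : Fin N → ℝ) (hN : 1 ≤ N) (t : ℝ) :
    orderStat u N ≤ t ↔ ∀ i, u i ≤ t := by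
  have hle := Finset.card_filter_le (Finset.univ : Finset (Fin N)) fun i => u i ≤ t
  have heq := Finset.card_filter_eq_iff (s := (Finset.univ : Finset (Fin N))) (p := fun i => u i ≤ t)
  simp only [Finset.card_univ, Fintype.card_fin, Finset.mem_univ, true_imp_iff] at hle heq
  rw [orderStat_le_iff u hN le_rfl, hle.ge_iff_eq, heq]

theorem orderStat_le_of_orderStat_self_le {u : Fin N → ℝ} (hr1 : 1 ≤ r) (hrN : r ≤ N) {t : ℝ}
    (h : orderStat u N ≤ t) : orderStat u r ≤ t :=
  (orderStat_le_iff u hr1 hrN t).mpr <|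
    hrN.trans <| (orderStat_le_iff u (hr1.trans hrN) le_rfl t).mp h

theorem exists_le_of_orderStat_le {u : Fin N → ℝ} (hr1 : 1 ≤ r) (hrN : r ≤ N) {t : ℝ}
    (h : orderStat u r ≤ t) : ∃ i, u i ≤ t := by
  obtain ⟨i, hi⟩ := Finset.card_pos.mp (hr1.trans ((orderStat_le_iff u hr1 hrN t).mp h))
  exact ⟨i, (Finset.mem_filter.mp hi).2⟩

theorem measurable_orderStat (hr1 : 1 ≤ r) (hrN : r ≤ N) :
    Measurable fun u : Fin N → ℝ => orderStat u r := by
  refine measurable_of_Iic fun t => ?_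
  have hset : (fun u : Fin N → ℝ => orderStat u r) ⁻¹' Iic t
      = {u | r ≤ (Finset.univ.filter fun i => u i ≤ t).card} :=
    Set.ext fun u => orderStat_le_iff u hr1 hrN t
  have hcard : Measurable fun u : Fin N → ℝ => (Finset.univ.filter fun i => u i ≤ t).card := by
    simp_rw [Finset.card_filter]
    exact Finset.measurable_sum _ fun i _ =>
      Measurable.ite (measurable_pi_apply i measurableSet_Iic) measurable_const measurable_const
  rw [hset]
  exact hcard measurableSet_Ici

end OrderStat

theorem volume_restrict_unitInterval_Iic {t : ℝ} (ht : t ≤ 1) :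
    volume.restrict (Icc (0:ℝ) 1) (Iic t) = ENNReal.ofReal t := by
  have hinter : Iic t ∩ Icc (0:ℝ) 1 = Icc 0 t := by
    ext x
    simp only [mem_inter_iff, mem_Iic, mem_Icc]
    constructor
    · rintro ⟨hxt, hx0, -⟩
      exact ⟨hx0, hxt⟩
    · rintro ⟨hx0, hxt⟩
      exact ⟨hxt, hx0, hxt.trans ht⟩
  rw [Measure.restrict_apply measurableSet_Iic, hinter, Real.volume_Icc, sub_zero]

instance (N : ℕ) : IsProbabilityMeasure (unifPi N) :=
  haveI : IsProbabilityMeasure (volume.restrict (Icc (0:ℝ) 1)) :=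
    ⟨by simp [Real.volume_Icc]⟩
  Measure.pi.instIsProbabilityMeasure _

section BetaCDF

variable {N r : ℕ}

theorem betaCDF_eq (hr1 : 1 ≤ r) (hrN : r ≤ N) (t : ℝ) :
    betaCDF N r t = (unifPi N {u | orderStat u r ≤ t}).toReal := by
  rw [betaCDF, betaOS, Measure.map_apply (measurable_orderStat hr1 hrN) measurableSet_Iic]
  rfl

theorem betaCDF_self (hN : 1 ≤ N) {t : ℝ} (ht0 : 0 ≤ t) (ht1 : t ≤ 1) :
    betaCDF N N t = t ^ N := by
  have hset : {u : Fin N → ℝ | orderStat u N ≤ t} = Set.pi univ fun _ => Iic t :=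
    Set.ext fun u => (orderStat_self_le_iff u hN t).trans (by simp only [mem_univ_pi, mem_Iic])
  rw [betaCDF_eq hN le_rfl, hset, unifPi, Measure.pi_pi]
  simp [volume_restrict_unitInterval_Iic ht1, ENNReal.toReal_ofReal ht0]

theorem betaCDF_self_le (hr1 : 1 ≤ r) (hrN : r ≤ N) (t : ℝ) :
    betaCDF N N t ≤ betaCDF N r t := by
  rw [betaCDF_eq (hr1.trans hrN) le_rfl, betaCDF_eq hr1 hrN]
  exact ENNReal.toReal_mono (measure_ne_top _ _)
    (measure_mono fun u => orderStat_le_of_orderStat_self_le hr1 hrN)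

theorem one_le_betaCDF_one (hr1 : 1 ≤ r) (hrN : r ≤ N) : 1 ≤ betaCDF N r 1 := by
  simpa [betaCDF_self (hr1.trans hrN) zero_le_one le_rfl] using betaCDF_self_le hr1 hrN 1

theorem betaCDF_of_neg (hr1 : 1 ≤ r) (hrN : r ≤ N) {t : ℝ} (ht : t < 0) :
    betaCDF N r t = 0 := by
  have hcoord : ∀ i : Fin N, unifPi N (Function.eval i ⁻¹' Iic t) = 0 := fun i =>
    Measure.pi_eval_preimage_null _ <| by
      rw [volume_restrict_unitInterval_Iic (ht.le.trans zero_le_one), ENNReal.ofReal_of_nonpos ht.le]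
  have hnull : unifPi N {u | orderStat u r ≤ t} = 0 :=
    measure_mono_null (fun u hu => mem_iUnion.mpr (exists_le_of_orderStat_le hr1 hrN hu))
      (measure_iUnion_null hcoord)
  rw [betaCDF_eq hr1 hrN, hnull, ENNReal.toReal_zero]

theorem betaCDF_monotone (hr1 : 1 ≤ r) (hrN : r ≤ N) : Monotone (betaCDF N r) := by
  intro s t hst
  rw [betaCDF_eq hr1 hrN, betaCDF_eq hr1 hrN]
  exact ENNReal.toReal_mono (measure_ne_top _ _) (measure_mono fun u hu => le_trans hu hst)

end BetaCDF

section GenInv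

variable {F G : ℝ → ℝ} {p q : ℝ}

theorem genInv_le_genInv_of_le (hFG : ∀ x, F x ≤ G x) (hG : BddBelow {x | p ≤ G x})
    (hF : ∃ x, p ≤ F x) : genInv G p ≤ genInv F p :=
  csInf_le_csInf hG hF fun x hx => le_trans hx (hFG x)

theorem genInv_le_genInv (hpq : p ≤ q) (hF : BddBelow {x | p ≤ F x}) (hq : ∃ x, q ≤ F x) :
    genInv F p ≤ genInv F q :=
  csInf_le_csInf hF hq fun _ hx => hpq.trans hx

theorem zero_mem_lowerBounds_setOf_le (hF_neg : ∀ x < 0, F x = 0) (hp : 0 < p) :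
    0 ∈ lowerBounds {x | p ≤ F x} :=
  fun x hx => not_lt.mp fun hx0 => (hp.trans_le hx).ne' (hF_neg x hx0)

theorem genInv_of_nonpos (hF_nonneg : ∀ x, 0 ≤ F x) (hp : p ≤ 0) : genInv F p = 0 := by
  have huniv : {x | p ≤ F x} = univ := eq_univ_of_forall fun x => hp.trans (hF_nonneg x)
  rw [genInv, huniv, Real.sInf_univ]

theorem genInv_nonneg (hF_nonneg : ∀ x, 0 ≤ F x) (hF_neg : ∀ x < 0, F x = 0) (p : ℝ) :
    0 ≤ genInv F p := by
  rcases le_or_gt p 0 with hp | hp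
  · exact (genInv_of_nonpos hF_nonneg hp).ge
  · exact Real.sInf_nonneg (zero_mem_lowerBounds_setOf_le hF_neg hp)

/-- Below `0` the quantile takes the junk value `sInf univ = 0`, which keeps it monotone. -/
theorem genInv_monotoneOn (hF_nonneg : ∀ x, 0 ≤ F x) (hF_neg : ∀ x < 0, F x = 0)
    (hF_one : 1 ≤ F 1) : MonotoneOn (genInv F) (Iic 1) := by
  intro p _ q hq hpq
  rcases le_or_gt p 0 with hp | hp
  · rw [genInv_of_nonpos hF_nonneg hp]
    exact genInv_nonneg hF_nonneg hF_neg q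
  · exact genInv_le_genInv hpq ⟨0, zero_mem_lowerBounds_setOf_le hF_neg hp⟩ ⟨1, hq.trans hF_one⟩

end GenInv

section BetaQuantile

variable {N r : ℕ}

theorem betaQuantile_self (hN : 1 ≤ N) {p : ℝ} (hp0 : 0 < p) (hp1 : p ≤ 1) :
    betaQuantile N N p = p ^ (N : ℝ)⁻¹ := by
  set c := p ^ (N : ℝ)⁻¹
  have hN0 : N ≠ 0 := by omega
  have hc0 : 0 < c := Real.rpow_pos_of_pos hp0 _
  have hc1 : c ≤ 1 := Real.rpow_le_one hp0.le hp1 (by positivity)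
  have hcN : c ^ N = p := Real.rpow_inv_natCast_pow hp0.le hN0
  have hset : {x | p ≤ betaCDF N N x} = Ici c := by
    ext x
    simp only [mem_ofPred_eq, mem_Ici]
    constructor
    · intro hx
      by_contra! hxc
      rcases lt_or_ge x 0 with hx0 | hx0
      · rw [betaCDF_of_neg hN le_rfl hx0] at hx
        linarith
      · rw [betaCDF_self hN hx0 (hxc.le.trans hc1), ← hcN] at hx
        exact (pow_lt_pow_left₀ hxc hx0 hN0).not_ge hx
    · intro hcx
      calc p = betaCDF N N c := by rw [betaCDF_self hN hc0.le hc1, hcN]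
        _ ≤ betaCDF N N x := betaCDF_monotone hN le_rfl hcx
  rw [betaQuantile, genInv, hset, csInf_Ici]

theorem betaQuantile_monotoneOn (hr1 : 1 ≤ r) (hrN : r ≤ N) :
    MonotoneOn (betaQuantile N r) (Iic 1) :=
  genInv_monotoneOn (fun _ => ENNReal.toReal_nonneg) (fun _ => betaCDF_of_neg hr1 hrN)
    (one_le_betaCDF_one hr1 hrN)

theorem betaQuantile_le_rpow (hr1 : 1 ≤ r) (hrN : r ≤ N) {p : ℝ} (hp0 : 0 < p) (hp1 : p ≤ 1) :
    betaQuantile N r p ≤ p ^ (N : ℝ)⁻¹ := by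
  have hN : 1 ≤ N := hr1.trans hrN
  rw [← betaQuantile_self hN hp0 hp1]
  exact genInv_le_genInv_of_le (betaCDF_self_le hr1 hrN)
    ⟨0, zero_mem_lowerBounds_setOf_le (fun _ => betaCDF_of_neg hr1 hrN) hp0⟩
    ⟨1, hp1.trans (one_le_betaCDF_one hN le_rfl)⟩

end BetaQuantile

theorem le_rpow_inv_iff_log_div_log_le {a b x : ℝ} (ha0 : 0 < a) (ha1 : a < 1) (hb : 0 < b)
    (hx : 0 < x) : a ≤ b ^ x⁻¹ ↔ Real.log b / Real.log a ≤ x := by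
  rw [← Real.log_le_log_iff ha0 (Real.rpow_pos_of_pos hb _), Real.log_rpow hb,
    div_le_iff_of_neg (Real.log_neg ha0 ha1), inv_mul_eq_div, le_div_iff₀ hx, mul_comm]

/-- The maximum over `(ℓ,k) ∈ {1,…,n}×{1,…,m}` of the `β`-quantile
`F_{U_(ℓ:n,k:m)}⁻¹(β) = F_{U_(ℓ:n)}⁻¹(F_{U_(k:m)}⁻¹(β))` equals `β^{1/(mn)}`;
consequently there is `(ℓ,k)` with `F_{U_(ℓ:n,k:m)}⁻¹(β) ≥ 1-α` iff
`mn ≥ log β / log(1-α)`. -/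
theorem qq_quantile_max (n m : ℕ) (hn : 1 ≤ n) (hm : 1 ≤ m)
    (α β : ℝ) (hα : α ∈ Ioo (0:ℝ) 1) (hβ : β ∈ Ioo (0:ℝ) 1) :
    (∀ ℓ k, 1 ≤ ℓ → ℓ ≤ n → 1 ≤ k → k ≤ m →
      betaQuantile n ℓ (betaQuantile m k β) ≤ β ^ (((m : ℝ) * n)⁻¹))
    ∧ betaQuantile n n (betaQuantile m m β) = β ^ (((m : ℝ) * n)⁻¹)
    ∧ ((∃ ℓ k, 1 ≤ ℓ ∧ ℓ ≤ n ∧ 1 ≤ k ∧ k ≤ m ∧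
          1 - α ≤ betaQuantile n ℓ (betaQuantile m k β))
        ↔ Real.log β / Real.log (1 - α) ≤ (m : ℝ) * n) := by
  obtain ⟨hα0, hα1⟩ := hα
  obtain ⟨hβ0, hβ1⟩ := hβ
  set q := β ^ (m : ℝ)⁻¹
  have hq0 : 0 < q := Real.rpow_pos_of_pos hβ0 _
  have hq1 : q ≤ 1 := Real.rpow_le_one hβ0.le hβ1.le (by positivity)
  have hqn : q ^ (n : ℝ)⁻¹ = β ^ ((m : ℝ) * n)⁻¹ := by
    rw [← Real.rpow_mul hβ0.le, mul_inv]
  have hmax : betaQuantile n n (betaQuantile m m β) = β ^ ((m : ℝ) * n)⁻¹ := by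
    rw [betaQuantile_self hm hβ0 hβ1.le, betaQuantile_self hn hq0 hq1, hqn]
  have hbound : ∀ ℓ k, 1 ≤ ℓ → ℓ ≤ n → 1 ≤ k → k ≤ m →
      betaQuantile n ℓ (betaQuantile m k β) ≤ β ^ ((m : ℝ) * n)⁻¹ := by
    intro ℓ k hℓ1 hℓn hk1 hkm
    have hinner : betaQuantile m k β ≤ q := betaQuantile_le_rpow hk1 hkm hβ0 hβ1.le
    calc betaQuantile n ℓ (betaQuantile m k β)
        ≤ betaQuantile n ℓ q :=
          betaQuantile_monotoneOn hℓ1 hℓn (hinner.trans hq1) hq1 hinner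
      _ ≤ β ^ ((m : ℝ) * n)⁻¹ := hqn ▸ betaQuantile_le_rpow hℓ1 hℓn hq0 hq1
  refine ⟨hbound, hmax, ?_⟩
  rw [← le_rpow_inv_iff_log_div_log_le (by linarith) (by linarith) hβ0 (by positivity)]
  constructor
  · rintro ⟨ℓ, k, hℓ1, hℓn, hk1, hkm, hle⟩
    exact hle.trans (hbound ℓ k hℓ1 hℓn hk1 hkm)
  · intro h
    exact ⟨n, m, hn, le_rfl, hm, le_rfl, hmax.symm ▸ h⟩
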